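/- arXiv:1107.5511 — 5 statements merged into one kernel-verified Lean document; each statement's English description precedes it below -/
import Mathlib

section
/- In a weak semilattice, if A is a maximal consistent subset, a,b ∈ A, and a^↓ ∩ b^↓ = {c_1,…,c_m}^↓, then c_j ∈ A for some j. -/
class InvSemigroup (S : Type*) extends Mul S, Inv S where
  mul_assoc : ∀ a b c : S, a * b * c = a * (b * c)
  mul_inv_mul : ∀ a : S, a * a⁻¹ * a = a
  inv_mul_inv : ∀ a : S, a⁻¹ * a * a⁻¹ = a⁻¹
  idem_comm : ∀ e f : S, e * e = e → f * f = f → e * f = f * e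

class InvSemigroupWithZero (S : Type*) extends InvSemigroup S, Zero S where
  zero_mul : ∀ a : S, 0 * a = 0
  mul_zero : ∀ a : S, a * 0 = 0

/-- The natural partial order on an inverse semigroup: `a ≤ b` iff `a = b * (a⁻¹ * a)`. -/
def nle {S : Type*} [InvSemigroup S] (a b : S) : Prop := a = b * (a⁻¹ * a)

/-- The weak meet condition: every intersection of two principal order ideals is a
finitely generated order ideal. -/
def WeakMeet (S : Type*) [InvSemigroup S] : Prop :=
  ∀ a b : S, ∃ C : Finset S,
    {x : S | nle x a ∧ nle x b} = {x : S | ∃ c ∈ C, nle x c}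

/-- A subset is consistent if every finite nonempty subset has a nonzero lower bound. -/
def Consistent {S : Type*} [InvSemigroupWithZero S] (A : Set S) : Prop :=
  ∀ B : Finset S, ↑B ⊆ A → B.Nonempty → ∃ b : S, b ≠ 0 ∧ ∀ a ∈ B, nle b a

/-- In a weak semilattice, if `A` is a maximal consistent subset, `a, b ∈ A` and
`a^↓ ∩ b^↓ = {c₁,…,c_m}^↓`, then some `c_j ∈ A`. -/
theorem stmt1 {S : Type*} [InvSemigroupWithZero S] (hw : WeakMeet S)
    (A : Set S) (hA : Consistent A)
    (hmax : ∀ C : Set S, Consistent C → A ⊆ C → C = A)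
    {a b : S} (ha : a ∈ A) (hb : b ∈ A) (C : Finset S)
    (hC : {x : S | nle x a ∧ nle x b} = {x : S | ∃ c ∈ C, nle x c}) :
    ∃ c ∈ C, c ∈ A := by
  classical
  by_contra h
  push_neg at h
  have hB : ∀ c ∈ C, ∃ B' : Finset S, ↑B' ⊆ insert c A ∧ B'.Nonempty ∧
      ∀ x : S, x ≠ 0 → ∃ y ∈ B', ¬ nle x y := by
    intro c hc
    have hnc : ¬ Consistent (insert c A) := by
      intro hcons
      have heq := hmax (insert c A) hcons (Set.subset_insert c A)
      exact h c hc (heq ▸ Set.mem_insert c A)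
    unfold Consistent at hnc
    push_neg at hnc
    obtain ⟨B', h1, h2, h3⟩ := hnc
    exact ⟨B', h1, h2, h3⟩
  choose Bc hBc1 hBc2 hBc3 using hB
  set BigB : Finset S :=
    insert a (insert b (C.attach.biUnion (fun c => (Bc c.1 c.2).erase c.1))) with hBig
  have hsub : ↑BigB ⊆ A := by
    intro x hx
    simp only [hBig, Finset.coe_insert, Set.mem_insert_iff, Finset.coe_biUnion,
      Set.mem_iUnion, Finset.mem_coe, Finset.mem_erase, Finset.mem_attach] at hx
    rcases hx with rfl | rfl | ⟨c, _, hne, hmem⟩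
    · exact ha
    · exact hb
    · have := hBc1 c.1 c.2 hmem
      rcases this with rfl | hmem'
      · exact absurd rfl hne
      · exact hmem'
  obtain ⟨x, hx0, hxlb⟩ := hA BigB hsub ⟨a, by simp [hBig]⟩
  have hxa : nle x a := hxlb a (by simp [hBig])
  have hxb : nle x b := hxlb b (by simp [hBig])
  have hx : x ∈ {x : S | ∃ c ∈ C, nle x c} := hC ▸ ⟨hxa, hxb⟩
  obtain ⟨c, hc, hxc⟩ := hx
  obtain ⟨y, hy, hny⟩ := hBc3 c hc x hx0
  apply hny
  by_cases hyc : y = c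
  · exact hyc ▸ hxc
  · exact hxlb y (by
      simp only [hBig, Finset.mem_insert, Finset.mem_biUnion, Finset.mem_attach,
        Finset.mem_erase, true_and]
      exact Or.inr (Or.inr ⟨⟨c, hc⟩, hyc, hy⟩))
end

section
/- Let S be an inverse semigroup with zero satisfying the weak meet condition and let F be a proper filter in S. Then F is an ultrafilter if and only if: whenever b ∈ S satisfies b^↓ ∩ a^↓ ≠ 0 for all a ∈ F, we have b ∈ F. -/
/-- A (proper) filter: nonempty, upward closed, downward directed, omitting zero. -/
def IsFilter {S : Type*} [InvSemigroupWithZero S] (F : Set S) : Prop :=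
  F.Nonempty ∧ (∀ a ∈ F, ∀ b : S, nle a b → b ∈ F) ∧
    (∀ a ∈ F, ∀ b ∈ F, ∃ c ∈ F, nle c a ∧ nle c b) ∧ (0 : S) ∉ F

/-- An ultrafilter is a maximal proper filter. -/
def IsUltrafilter {S : Type*} [InvSemigroupWithZero S] (F : Set S) : Prop :=
  IsFilter F ∧ ∀ G : Set S, IsFilter G → F ⊆ G → G = F

section Aux

variable {S : Type*}

/-- View an inverse semigroup as a `Semigroup` so that `mul_assoc` is available. -/
instance (priority := 100) instSemigroupOfInvSemigroup [InvSemigroup S] : Semigroup S :=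
  { mul_assoc := InvSemigroup.mul_assoc }

lemma consr [InvSemigroup S] {x y : S} (h : x = y) (t : S) : x * t = y * t := by rw [h]

lemma idem_inv_mul [InvSemigroup S] (a : S) : (a⁻¹ * a) * (a⁻¹ * a) = a⁻¹ * a := by
  rw [← mul_assoc, InvSemigroup.inv_mul_inv]

lemma nle_refl [InvSemigroup S] (a : S) : nle a a := by
  show a = a * (a⁻¹ * a)
  rw [← mul_assoc, InvSemigroup.mul_inv_mul]

/-- Uniqueness of inverses in an inverse semigroup. -/
lemma isg_inv_unique [InvSemigroup S] (a x : S) (h1 : a * x * a = a) (h2 : x * a * x = x) :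
    x = a⁻¹ := by
  set y := a⁻¹ with hy
  have hy1 : a * y * a = a := InvSemigroup.mul_inv_mul a
  have hy2 : y * a * y = y := InvSemigroup.inv_mul_inv a
  have h2n : x * (a * x) = x := by simpa only [mul_assoc] using h2
  have hy2n : y * (a * y) = y := by simpa only [mul_assoc] using hy2
  have n1 : ∀ t : S, a * (y * (a * t)) = a * t := fun t => by
    simpa only [mul_assoc] using consr hy1 t
  have n2 : ∀ t : S, a * (x * (a * t)) = a * t := fun t => by
    simpa only [mul_assoc] using consr h1 t
  have n3 : ∀ t : S, y * (a * (y * t)) = y * t := fun t => by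
    simpa only [mul_assoc] using consr hy2 t
  have ixa : x * a * (x * a) = x * a := by rw [← mul_assoc, h2]
  have iya : y * a * (y * a) = y * a := by rw [← mul_assoc, hy2]
  have iax : a * x * (a * x) = a * x := by rw [← mul_assoc, h1]
  have iay : a * y * (a * y) = a * y := by rw [← mul_assoc, hy1]
  have cxy : ∀ t : S, x * (a * (y * (a * t))) = y * (a * (x * (a * t))) := fun t => by
    simpa only [mul_assoc] using consr (InvSemigroup.idem_comm _ _ ixa iya) t
  have caxy : a * (x * (a * y)) = a * (y * (a * x)) := by
    simpa only [mul_assoc] using InvSemigroup.idem_comm _ _ iax iay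
  have hxe : x = y * (a * x) := by
    calc x = x * (a * x) := h2n.symm
      _ = x * (a * (y * (a * x))) := by rw [n1 x]
      _ = y * (a * (x * (a * x))) := cxy x
      _ = y * (a * x) := by rw [n2 x]
  have hye : y = y * (a * x) := by
    calc y = y * (a * y) := hy2n.symm
      _ = y * (a * (x * (a * y))) := by rw [n2 y]
      _ = y * (a * (y * (a * x))) := by rw [caxy]
      _ = y * (a * x) := n3 (a * x)
  exact hxe.trans hye.symm

/-- For an idempotent `e`, `(b * e)⁻¹ * (b * e) = e * (b⁻¹ * b)`. -/
lemma idem_nle_aux [InvSemigroup S] (b e : S) (hee : e * e = e) :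
    (b * e)⁻¹ * (b * e) = e * (b⁻¹ * b) := by
  have idemg : (b⁻¹ * b) * (b⁻¹ * b) = b⁻¹ * b := idem_inv_mul b
  have een : ∀ t : S, e * (e * t) = e * t := fun t => by rw [← mul_assoc, hee]
  have gn : ∀ t : S, b⁻¹ * (b * t) = (b⁻¹ * b) * t := fun t => (mul_assoc _ _ _).symm
  have cegn : ∀ t : S, e * ((b⁻¹ * b) * t) = (b⁻¹ * b) * (e * t) := fun t => by
    rw [← mul_assoc, InvSemigroup.idem_comm _ _ hee idemg, mul_assoc]
  have bn : ∀ t : S, b * (b⁻¹ * (b * t)) = b * t := fun t => by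
    simpa only [mul_assoc] using consr (InvSemigroup.mul_inv_mul b) t
  have P1 : (b * e) * (e * b⁻¹) * (b * e) = b * e := by
    simp only [mul_assoc]
    rw [een, gn, cegn, hee, ← gn]
    exact bn e
  have P2 : (e * b⁻¹) * (b * e) * (e * b⁻¹) = e * b⁻¹ := by
    simp only [mul_assoc]
    rw [een, gn, cegn, een, ← cegn, InvSemigroup.inv_mul_inv]
  have hinv : e * b⁻¹ = (b * e)⁻¹ := isg_inv_unique _ _ P1 P2
  rw [← hinv]
  calc (e * b⁻¹) * (b * e) = e * (b⁻¹ * (b * e)) := mul_assoc _ _ _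
    _ = e * ((b⁻¹ * b) * e) := by rw [gn]
    _ = (b⁻¹ * b) * (e * e) := cegn e
    _ = (b⁻¹ * b) * e := by rw [hee]
    _ = e * (b⁻¹ * b) := (InvSemigroup.idem_comm _ _ hee idemg).symm

/-- If `a ≤ b` then `a⁻¹ * a = (a⁻¹ * a) * (b⁻¹ * b)`. -/
lemma nle_inv_mul [InvSemigroup S] {a b : S} (h : nle a b) :
    a⁻¹ * a = (a⁻¹ * a) * (b⁻¹ * b) := by
  have hab : a = b * (a⁻¹ * a) := h
  have h2 : a⁻¹ * a = (b * (a⁻¹ * a))⁻¹ * (b * (a⁻¹ * a)) := by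
    conv_lhs => rw [hab]
  rw [idem_nle_aux b (a⁻¹ * a) (idem_inv_mul a)] at h2
  exact h2

lemma nle_trans [InvSemigroup S] {a b c : S} (hab : nle a b) (hbc : nle b c) : nle a c := by
  have key : a⁻¹ * a = (a⁻¹ * a) * (b⁻¹ * b) := nle_inv_mul hab
  show a = c * (a⁻¹ * a)
  calc a = b * (a⁻¹ * a) := hab
    _ = (c * (b⁻¹ * b)) * (a⁻¹ * a) := consr hbc _
    _ = c * ((b⁻¹ * b) * (a⁻¹ * a)) := mul_assoc _ _ _
    _ = c * ((a⁻¹ * a) * (b⁻¹ * b)) := by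
          rw [InvSemigroup.idem_comm _ _ (idem_inv_mul b) (idem_inv_mul a)]
    _ = c * (a⁻¹ * a) := by rw [← key]

lemma nle_zero [InvSemigroupWithZero S] {a : S} (h : nle a 0) : a = 0 := by
  rw [h, InvSemigroupWithZero.zero_mul]

/-- Every finite subset of a filter has a lower bound in the filter. -/
lemma filter_finset_lb [InvSemigroupWithZero S] {F : Set S} (hF : IsFilter F)
    (B : Finset S) : ↑B ⊆ F → ∃ a ∈ F, ∀ x ∈ B, nle a x := by
  classical
  induction B using Finset.induction_on with
  | empty =>
      intro _
      obtain ⟨a, ha⟩ := hF.1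
      exact ⟨a, ha, by simp⟩
  | @insert y B' hy ih =>
      intro hB
      have hyF : y ∈ F := hB (by simp)
      have hB' : ↑B' ⊆ F := fun z hz => hB (by simp [hz])
      obtain ⟨a, haF, ha⟩ := ih hB'
      obtain ⟨c, hcF, hca, hcy⟩ := hF.2.2.1 a haF y hyF
      refine ⟨c, hcF, ?_⟩
      intro z hz
      rcases Finset.mem_insert.mp hz with rfl | hz
      · exact hcy
      · exact nle_trans hca (ha z hz)

/-- A maximal consistent set is a filter (uses the weak meet condition). -/
lemma maximal_consistent_filter [InvSemigroupWithZero S] (hw : WeakMeet S)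
    {T A : Set S} (hTne : T.Nonempty) (hTA : T ⊆ A)
    (hmax : Maximal (fun X => T ⊆ X ∧ Consistent X) A) : IsFilter A := by
  classical
  obtain ⟨⟨hTA', hcons⟩, hm⟩ := hmax
  have hup : ∀ a ∈ A, ∀ y : S, nle a y → y ∈ A := by
    intro a ha y hay
    have hconsy : Consistent (A ∪ {y}) := by
      intro B hB hBne
      have hsub : ↑(insert a (B.erase y)) ⊆ A := by
        intro z hz
        rcases Finset.mem_insert.mp hz with rfl | hz
        · exact ha
        · rcases hB (Finset.mem_of_mem_erase hz) with h | h
          · exact h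
          · exact absurd (Set.mem_singleton_iff.mp h) (Finset.ne_of_mem_erase hz)
      obtain ⟨x, hx0, hx⟩ := hcons _ hsub ⟨a, Finset.mem_insert_self _ _⟩
      refine ⟨x, hx0, ?_⟩
      intro z hz
      by_cases hzy : z = y
      · subst hzy
        exact nle_trans (hx a (Finset.mem_insert_self _ _)) hay
      · exact hx z (Finset.mem_insert_of_mem (Finset.mem_erase.mpr ⟨hzy, hz⟩))
    have : A ∪ {y} ⊆ A :=
      hm ⟨hTA'.trans Set.subset_union_left, hconsy⟩ Set.subset_union_left
    exact this (Or.inr rfl)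
  have hAne : A.Nonempty := hTne.mono hTA
  have h0 : (0 : S) ∉ A := by
    intro h0
    obtain ⟨x, hx0, hx⟩ := hcons {0} (by simpa using h0) ⟨0, by simp⟩
    exact hx0 (nle_zero (hx 0 (by simp)))
  refine ⟨hAne, hup, ?_, h0⟩
  intro a₁ ha₁ a₂ ha₂
  obtain ⟨C, hC⟩ := hw a₁ a₂
  by_contra hcontra
  push_neg at hcontra
  have hno : ∀ d ∈ C, ¬ Consistent (A ∪ {d}) := by
    intro d hd hconsd
    have hdmem : nle d a₁ ∧ nle d a₂ := by
      have : d ∈ {x : S | ∃ c ∈ C, nle x c} := ⟨d, hd, nle_refl d⟩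
      rw [← hC] at this
      exact this
    have hdA : d ∈ A := by
      have : A ∪ {d} ⊆ A :=
        hm ⟨hTA'.trans Set.subset_union_left, hconsd⟩ Set.subset_union_left
      exact this (Or.inr rfl)
    exact hcontra d hdA hdmem.1 hdmem.2
  have hchoice : ∀ d : S, ∃ B : Finset S, d ∈ C →
      (↑B ⊆ A ∪ {d} ∧ B.Nonempty ∧ ¬ ∃ x : S, x ≠ 0 ∧ ∀ z ∈ B, nle x z) := by
    intro d
    by_cases hd : d ∈ C
    · have h' := hno d hd
      unfold Consistent at h'
      push_neg at h'
      obtain ⟨B, hB1, hB2, hB3⟩ := h'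
      refine ⟨B, fun _ => ⟨hB1, hB2, ?_⟩⟩
      rintro ⟨x, hx0, hx⟩
      obtain ⟨z, hzB, hnz⟩ := hB3 x hx0
      exact hnz (hx z hzB)
    · exact ⟨∅, fun h => absurd h hd⟩
  choose f hf using hchoice
  set B : Finset S := insert a₁ (insert a₂ (C.biUnion (fun d => (f d).erase d))) with hBdef
  have hBA : ↑B ⊆ A := by
    intro z hz
    simp only [hBdef, Finset.coe_insert, Set.mem_insert_iff, Finset.coe_biUnion,
      Set.mem_iUnion, Finset.mem_coe] at hz
    rcases hz with rfl | rfl | ⟨d, hd, hzd⟩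
    · exact ha₁
    · exact ha₂
    · rcases (hf d hd).1 (Finset.mem_of_mem_erase hzd) with h | h
      · exact h
      · exact absurd (Set.mem_singleton_iff.mp h) (Finset.ne_of_mem_erase hzd)
  obtain ⟨x, hx0, hx⟩ := hcons B hBA ⟨a₁, by simp [hBdef]⟩
  have hxa₁ : nle x a₁ := hx a₁ (by simp [hBdef])
  have hxa₂ : nle x a₂ := hx a₂ (by simp [hBdef])
  have hxmem : x ∈ {x : S | ∃ c ∈ C, nle x c} := by
    rw [← hC]; exact ⟨hxa₁, hxa₂⟩
  obtain ⟨d, hdC, hxd⟩ := hxmem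
  obtain ⟨hf1, hf2, hf3⟩ := hf d hdC
  apply hf3
  refine ⟨x, hx0, ?_⟩
  intro z hz
  by_cases hzd : z = d
  · subst hzd; exact hxd
  · apply hx
    simp only [hBdef, Finset.mem_insert, Finset.mem_biUnion]
    exact Or.inr (Or.inr ⟨d, hdC, Finset.mem_erase.mpr ⟨hzd, hz⟩⟩)

end Aux

/-- Let `S` satisfy the weak meet condition and `F` be a proper filter. Then `F` is an
ultrafilter iff whenever `b^↓ ∩ a^↓ ≠ 0` for all `a ∈ F`, we have `b ∈ F`. -/
theorem stmt3 {S : Type*} [InvSemigroupWithZero S] (hw : WeakMeet S)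
    (F : Set S) (hF : IsFilter F) :
    IsUltrafilter F ↔
      ∀ b : S, (∀ a ∈ F, ∃ x : S, x ≠ 0 ∧ nle x a ∧ nle x b) → b ∈ F := by
  classical
  constructor
  · rintro ⟨_, hmax⟩ b hb
    set T : Set S := F ∪ {b} with hT
    have hTcons : Consistent T := by
      intro B hB hBne
      have hsub : ↑(B.erase b) ⊆ F := by
        intro z hz
        rcases hB (Finset.mem_of_mem_erase hz) with h | h
        · exact h
        · exact absurd (Set.mem_singleton_iff.mp h) (Finset.ne_of_mem_erase hz)
      obtain ⟨a, haF, ha⟩ := filter_finset_lb hF _ hsub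
      obtain ⟨x, hx0, hxa, hxb⟩ := hb a haF
      refine ⟨x, hx0, ?_⟩
      intro z hz
      by_cases hzb : z = b
      · subst hzb; exact hxb
      · exact nle_trans hxa (ha z (Finset.mem_erase.mpr ⟨hzb, hz⟩))
    obtain ⟨A, hTA, hAmax⟩ := zorn_subset_nonempty {X : Set S | T ⊆ X ∧ Consistent X}
      (fun c hc hchain hcne => by
        refine ⟨⋃₀ c, ⟨?_, ?_⟩, fun s hs => Set.subset_sUnion_of_mem hs⟩
        · obtain ⟨s, hs⟩ := hcne
          exact (hc hs).1.trans (Set.subset_sUnion_of_mem hs)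
        · intro B hB hBne
          obtain ⟨s, hsc, hBs⟩ :=
            DirectedOn.exists_mem_subset_of_finset_subset_biUnion (f := fun i => i)
              hcne hchain.directedOn (by rw [← Set.sUnion_eq_biUnion]; exact hB)
          exact (hc hsc).2 B hBs hBne)
      T ⟨Set.Subset.rfl, hTcons⟩
    have hTne : T.Nonempty := hF.1.mono Set.subset_union_left
    have hAfil : IsFilter A := maximal_consistent_filter hw hTne hTA hAmax
    have hFA : F ⊆ A := Set.subset_union_left.trans hTA
    have hAF := hmax A hAfil hFA
    rw [← hAF]
    exact hTA (Or.inr rfl)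
  · intro h
    refine ⟨hF, fun G hG hFG => ?_⟩
    apply Set.Subset.antisymm _ hFG
    intro b hbG
    apply h
    intro a haF
    obtain ⟨c, hcG, hca, hcb⟩ := hG.2.2.1 a (hFG haF) b hbG
    refine ⟨c, ?_, hca, hcb⟩
    rintro rfl
    exact hG.2.2.2 hcG
end

section
/- A (not necessarily unital) distributive lattice is a generalized boolean algebra if and only if every prime filter is an ultrafilter. -/
/-- A (proper) filter in a lattice with bottom: nonempty, upward closed, closed under
binary meets and not containing `⊥`. -/
def IsLatFilter {L : Type*} [Lattice L] [OrderBot L] (F : Set L) : Prop :=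
  F.Nonempty ∧ (∀ a ∈ F, ∀ b : L, a ≤ b → b ∈ F) ∧
    (∀ a ∈ F, ∀ b ∈ F, a ⊓ b ∈ F) ∧ (⊥ : L) ∉ F

/-- An ultrafilter is a maximal proper filter. -/
def IsLatUltrafilter {L : Type*} [Lattice L] [OrderBot L] (F : Set L) : Prop :=
  IsLatFilter F ∧ ∀ G : Set L, IsLatFilter G → F ⊆ G → G = F

/-- A prime filter: `a ⊔ b ∈ F` implies `a ∈ F` or `b ∈ F`. -/
def IsLatPrimeFilter {L : Type*} [Lattice L] [OrderBot L] (F : Set L) : Prop :=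
  IsLatFilter F ∧ ∀ a b : L, a ⊔ b ∈ F → a ∈ F ∨ b ∈ F

/-- Separation: given an ideal-like set `I` (downward closed, join-closed) and
`a ∉ I`, there is a prime filter containing `a` disjoint from `I`. -/
lemma sep_prime_filter {L : Type*} [DistribLattice L] (I : Set L)
    (hId : ∀ x ∈ I, ∀ y, y ≤ x → y ∈ I) (hIj : ∀ x ∈ I, ∀ y ∈ I, x ⊔ y ∈ I)
    (a : L) (ha : a ∉ I) :
    ∃ P : Set L, a ∈ P ∧ (∀ x ∈ P, ∀ y, x ≤ y → y ∈ P) ∧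
      (∀ x ∈ P, ∀ y ∈ P, x ⊓ y ∈ P) ∧ (∀ x ∈ P, x ∉ I) ∧
      ∀ x y : L, x ⊔ y ∈ P → x ∈ P ∨ y ∈ P := by
  set S : Set (Set L) := {F | a ∈ F ∧ (∀ x ∈ F, ∀ y, x ≤ y → y ∈ F) ∧
      (∀ x ∈ F, ∀ y ∈ F, x ⊓ y ∈ F) ∧ ∀ x ∈ F, x ∉ I} with hS
  have h0 : Set.Ici a ∈ S := by
    refine ⟨le_refl a, fun x hx y hy => le_trans hx hy,
      fun x hx y hy => le_inf hx hy, fun x hx hxI => ha (hId x hxI a hx)⟩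
  have hchainS : ∀ c ⊆ S, IsChain (· ⊆ ·) c → c.Nonempty →
      ∃ ub ∈ S, ∀ s ∈ c, s ⊆ ub := by
    intro c hcS hchain hcne
    obtain ⟨F0, hF0⟩ := hcne
    refine ⟨⋃₀ c, ⟨Set.mem_sUnion.2 ⟨F0, hF0, (hcS hF0).1⟩, ?_, ?_, ?_⟩,
      fun s hs => Set.subset_sUnion_of_mem hs⟩
    · rintro x ⟨F, hF, hxF⟩ y hxy
      exact ⟨F, hF, (hcS hF).2.1 x hxF y hxy⟩
    · rintro x ⟨F, hF, hxF⟩ y ⟨G, hG, hyG⟩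
      rcases hchain.total hF hG with h | h
      · exact ⟨G, hG, (hcS hG).2.2.1 x (h hxF) y hyG⟩
      · exact ⟨F, hF, (hcS hF).2.2.1 x hxF y (h hyG)⟩
    · rintro x ⟨F, hF, hxF⟩
      exact (hcS hF).2.2.2 x hxF
  obtain ⟨P, haP, hPmax⟩ := zorn_subset_nonempty S hchainS _ h0
  have hPS : P ∈ S := hPmax.1
  obtain ⟨haP', hup, hinf, hdisj⟩ := hPS
  refine ⟨P, haP', hup, hinf, hdisj, ?_⟩
  intro x y hxy
  by_contra h
  push_neg at h
  obtain ⟨hx, hy⟩ := h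
  -- extend by x
  have key : ∀ z : L, z ∉ P →
      ∃ p ∈ P, ∃ i ∈ I, p ⊓ z ≤ i := by
    intro z hz
    by_contra hcon
    push_neg at hcon
    set G : Set L := {w | ∃ p ∈ P, p ⊓ z ≤ w} with hG
    have hGS : G ∈ S := by
      refine ⟨⟨a, haP', inf_le_left⟩, ?_, ?_, ?_⟩
      · rintro u ⟨p, hp, hpu⟩ v huv
        exact ⟨p, hp, le_trans hpu huv⟩
      · rintro u ⟨p, hp, hpu⟩ v ⟨q, hq, hqv⟩
        exact ⟨p ⊓ q, hinf p hp q hq, by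
          refine le_inf (le_trans ?_ hpu) (le_trans ?_ hqv)
          · exact inf_le_inf_right z inf_le_left
          · exact inf_le_inf_right z inf_le_right⟩
      · rintro u ⟨p, hp, hpu⟩ huI
        exact hcon p hp u huI hpu
    have hPG : P ⊆ G := fun p hp => ⟨p, hp, inf_le_left⟩
    have := hPmax.2 hGS hPG
    exact hz (this ⟨a, haP', inf_le_right⟩)
  obtain ⟨p, hp, i1, hi1, hpi1⟩ := key x hx
  obtain ⟨q, hq, i2, hi2, hqi2⟩ := key y hy
  have hmem : (p ⊓ q) ⊓ (x ⊔ y) ∈ P := hinf _ (hinf p hp q hq) _ hxy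
  have hle : (p ⊓ q) ⊓ (x ⊔ y) ≤ i1 ⊔ i2 := by
    rw [inf_sup_left]
    refine sup_le_sup (le_trans ?_ hpi1) (le_trans ?_ hqi2)
    · exact inf_le_inf_right x inf_le_left
    · exact inf_le_inf_right y inf_le_right
  exact hdisj _ hmem (hId _ (hIj _ hi1 _ hi2) _ hle)

/-- A distributive lattice (with bottom, possibly without top) is a generalized
boolean algebra (relative complements exist in every principal ideal) if and only
if every prime filter is an ultrafilter. -/
theorem stmt5 {L : Type*} [DistribLattice L] [OrderBot L] :
    (∀ a b : L, b ≤ a → ∃ c : L, b ⊓ c = ⊥ ∧ b ⊔ c = a) ↔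
      (∀ F : Set L, IsLatPrimeFilter F → IsLatUltrafilter F) := by
  constructor
  · intro hcompl F hF
    obtain ⟨⟨hne, hup, hinf, hbot⟩, hprime⟩ := hF
    refine ⟨⟨hne, hup, hinf, hbot⟩, ?_⟩
    intro G hG hFG
    obtain ⟨hGne, hGup, hGinf, hGbot⟩ := hG
    apply Set.Subset.antisymm _ hFG
    intro g hg
    obtain ⟨f, hf⟩ := hne
    obtain ⟨c, hc1, hc2⟩ := hcompl f (g ⊓ f) inf_le_right
    have : g ⊓ f ∈ F ∨ c ∈ F := hprime _ _ (show g ⊓ f ⊔ c ∈ F by rw [hc2]; exact hf)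
    rcases this with h | h
    · exact hup _ h g inf_le_left
    · exfalso
      have : g ⊓ f ⊓ c ∈ G := hGinf _ (hGinf g hg f (hFG hf)) c (hFG h)
      rw [hc1] at this
      exact hGbot this
  · intro hpf a b hba
    by_contra hno
    push_neg at hno
    set I : Set L := {x | ∃ c : L, b ⊓ c = ⊥ ∧ c ≤ a ∧ x ≤ b ⊔ c} with hI
    have hId : ∀ x ∈ I, ∀ y, y ≤ x → y ∈ I := by
      rintro x ⟨c, h1, h2, h3⟩ y hyx
      exact ⟨c, h1, h2, le_trans hyx h3⟩
    have hIj : ∀ x ∈ I, ∀ y ∈ I, x ⊔ y ∈ I := by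
      rintro x ⟨c, h1, h2, h3⟩ y ⟨d, k1, k2, k3⟩
      refine ⟨c ⊔ d, ?_, sup_le h2 k2, ?_⟩
      · rw [inf_sup_left, h1, k1, sup_idem]
      · calc x ⊔ y ≤ (b ⊔ c) ⊔ (b ⊔ d) := sup_le_sup h3 k3
          _ = b ⊔ (c ⊔ d) := by rw [sup_sup_sup_comm, sup_idem]
    have haI : a ∉ I := by
      rintro ⟨c, h1, h2, h3⟩
      exact hno c h1 (le_antisymm (sup_le hba h2) h3)
    obtain ⟨P, haP, hup, hinf, hdisj, hprime⟩ := sep_prime_filter I hId hIj a haI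
    have hbI : b ∈ I := ⟨⊥, inf_bot_eq b, bot_le, le_sup_left⟩
    have hbotI : (⊥ : L) ∈ I := hId b hbI ⊥ bot_le
    have hPfilter : IsLatPrimeFilter P :=
      ⟨⟨⟨a, haP⟩, hup, hinf, fun h => hdisj ⊥ h hbotI⟩, hprime⟩
    obtain ⟨_, hmax⟩ := hpf P hPfilter
    set G : Set L := {w | ∃ p ∈ P, p ⊓ b ≤ w} with hG
    have hGfilter : IsLatFilter G := by
      refine ⟨⟨b, a, haP, inf_le_right⟩, ?_, ?_, ?_⟩
      · rintro u ⟨p, hp, hpu⟩ v huv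
        exact ⟨p, hp, le_trans hpu huv⟩
      · rintro u ⟨p, hp, hpu⟩ v ⟨q, hq, hqv⟩
        exact ⟨p ⊓ q, hinf p hp q hq, by
          refine le_inf (le_trans ?_ hpu) (le_trans ?_ hqv)
          · exact inf_le_inf_right b inf_le_left
          · exact inf_le_inf_right b inf_le_right⟩
      · rintro ⟨p, hp, hpbot⟩
        have hpb : p ⊓ b = ⊥ := le_bot_iff.1 hpbot
        have hc : b ⊓ (p ⊓ a) = ⊥ := by
          rw [← inf_assoc, inf_comm b p, hpb, bot_inf_eq]
        have : b ⊔ p ⊓ a ∈ I := ⟨p ⊓ a, hc, inf_le_right, le_refl _⟩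
        have hmem : b ⊔ p ⊓ a ∈ P :=
          hup _ (hinf p hp a haP) _ le_sup_right
        exact hdisj _ hmem this
    have hPG : P ⊆ G := fun p hp => ⟨p, hp, inf_le_left⟩
    have := hmax G hGfilter hPG
    have hbG : b ∈ G := ⟨a, haP, inf_le_right⟩
    rw [this] at hbG
    exact hdisj b hbG hbI
end

section
/- Let S be a pseudogroup and let A, B be completely prime filters with (A⁻¹A)^↑ = (BB⁻¹)^↑. Then (AB)^↑ is a completely prime filter. -/
class InvMonoid (S : Type*) extends InvSemigroup S, One S where
  one_mul : ∀ a : S, 1 * a = a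
  mul_one : ∀ a : S, a * 1 = a

def IsIdem {S : Type*} [Mul S] (e : S) : Prop := e * e = e

/-- Two elements are compatible if `a⁻¹ * b` and `a * b⁻¹` are idempotents. -/
def Compat {S : Type*} [InvSemigroup S] (a b : S) : Prop :=
  IsIdem (a⁻¹ * b) ∧ IsIdem (a * b⁻¹)

def PairwiseCompat {S : Type*} [InvSemigroup S] (X : Set S) : Prop :=
  ∀ a ∈ X, ∀ b ∈ X, Compat a b

/-- `s` is the join (least upper bound) of `X` with respect to the natural partial order. -/
def IsJoin {S : Type*} [InvSemigroup S] (X : Set S) (s : S) : Prop :=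
  (∀ a ∈ X, nle a s) ∧ ∀ u : S, (∀ a ∈ X, nle a u) → nle s u

/-- A pseudogroup: a complete infinitely distributive inverse monoid. Every
compatible subset has a join and multiplication distributes over such joins. -/
class Pseudogroup (S : Type*) extends InvMonoid S where
  join_exists : ∀ X : Set S, PairwiseCompat X → ∃ s : S, IsJoin X s
  mul_join_left : ∀ (X : Set S) (s c : S), IsJoin X s → IsJoin ((fun x => c * x) '' X) (c * s)
  mul_join_right : ∀ (X : Set S) (s c : S), IsJoin X s → IsJoin ((fun x => x * c) '' X) (s * c)

/-- Filters: nonempty, upward closed, downward directed subsets. -/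
def IsPFilter {S : Type*} [InvSemigroup S] (F : Set S) : Prop :=
  F.Nonempty ∧ (∀ a ∈ F, ∀ b : S, nle a b → b ∈ F) ∧
    (∀ a ∈ F, ∀ b ∈ F, ∃ c ∈ F, nle c a ∧ nle c b)

/-- A completely prime filter: whenever a join of a compatible family belongs to the
filter, so does some member of the family. -/
def CompletelyPrime {S : Type*} [InvSemigroup S] (F : Set S) : Prop :=
  IsPFilter F ∧ ∀ (X : Set S) (s : S), PairwiseCompat X → IsJoin X s → s ∈ F →
    ∃ x ∈ X, x ∈ F

def setInv {S : Type*} [Inv S] (A : Set S) : Set S := {x | ∃ a ∈ A, x = a⁻¹}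

def setMul {S : Type*} [Mul S] (A B : Set S) : Set S :=
  {x | ∃ a ∈ A, ∃ b ∈ B, x = a * b}

def upSet {S : Type*} [InvSemigroup S] (A : Set S) : Set S := {x | ∃ a ∈ A, nle a x}

section InvLemmas

variable {S : Type*} [InvSemigroup S]

local instance : Semigroup S := { mul_assoc := InvSemigroup.mul_assoc }

private lemma pg_ama (a : S) : a * a⁻¹ * a = a := InvSemigroup.mul_inv_mul a
private lemma pg_imi (a : S) : a⁻¹ * a * a⁻¹ = a⁻¹ := InvSemigroup.inv_mul_inv a

private lemma pg_idem_comm' {e f : S} (he : IsIdem e) (hf : IsIdem f) : e * f = f * e :=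
  InvSemigroup.idem_comm e f he hf

private lemma pg_idem_ia (a : S) : IsIdem (a⁻¹ * a) := by
  show a⁻¹ * a * (a⁻¹ * a) = a⁻¹ * a
  calc a⁻¹ * a * (a⁻¹ * a) = a⁻¹ * (a * a⁻¹ * a) := by simp [mul_assoc]
    _ = a⁻¹ * a := by rw [pg_ama]

private lemma pg_idem_ai (a : S) : IsIdem (a * a⁻¹) := by
  show a * a⁻¹ * (a * a⁻¹) = a * a⁻¹
  calc a * a⁻¹ * (a * a⁻¹) = (a * a⁻¹ * a) * a⁻¹ := by simp [mul_assoc]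
    _ = a * a⁻¹ := by rw [pg_ama]

private lemma pg_idem_mul {e f : S} (he : IsIdem e) (hf : IsIdem f) : IsIdem (e * f) := by
  show e * f * (e * f) = e * f
  calc e * f * (e * f) = e * (f * e) * f := by simp [mul_assoc]
    _ = e * (e * f) * f := by rw [pg_idem_comm' hf he]
    _ = (e * e) * (f * f) := by simp [mul_assoc]
    _ = e * f := by rw [he, hf]

private lemma pg_inv_unique {a x y : S} (hx1 : a * x * a = a) (hx2 : x * a * x = x)
    (hy1 : a * y * a = a) (hy2 : y * a * y = y) : x = y := by
  have iax : IsIdem (a * x) := by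
    show a * x * (a * x) = a * x
    calc a * x * (a * x) = (a * x * a) * x := by simp [mul_assoc]
      _ = a * x := by rw [hx1]
  have iay : IsIdem (a * y) := by
    show a * y * (a * y) = a * y
    calc a * y * (a * y) = (a * y * a) * y := by simp [mul_assoc]
      _ = a * y := by rw [hy1]
  have hax : a * x = a * y := by
    calc a * x = (a * y * a) * x := by rw [hy1]
      _ = (a * y) * (a * x) := by simp [mul_assoc]
      _ = (a * x) * (a * y) := pg_idem_comm' iay iax
      _ = (a * x * a) * y := by simp [mul_assoc]
      _ = a * y := by rw [hx1]
  calc x = x * a * x := hx2.symm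
    _ = x * (a * x) := by rw [mul_assoc]
    _ = x * (a * y) := by rw [hax]
    _ = x * a * y := by rw [mul_assoc]
    _ = x * a * (y * a * y) := by rw [hy2]
    _ = (x * a) * (y * a) * y := by simp [mul_assoc]
    _ = (y * a) * (x * a) * y := by
        have ixa : IsIdem (x * a) := by
          show x * a * (x * a) = x * a
          calc x * a * (x * a) = (x * a * x) * a := by simp [mul_assoc]
            _ = x * a := by rw [hx2]
        have iya : IsIdem (y * a) := by
          show y * a * (y * a) = y * a
          calc y * a * (y * a) = (y * a * y) * a := by simp [mul_assoc]
            _ = y * a := by rw [hy2]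
        rw [pg_idem_comm' ixa iya]
    _ = y * (a * x * a) * y := by simp [mul_assoc]
    _ = y * a * y := by rw [hx1]
    _ = y := hy2

private lemma pg_inv_invol (a : S) : a⁻¹⁻¹ = a :=
  pg_inv_unique (a := a⁻¹) (pg_ama a⁻¹) (pg_imi a⁻¹) (pg_imi a) (pg_ama a)

private lemma pg_mul_inv_rev' (a b : S) : (a * b)⁻¹ = b⁻¹ * a⁻¹ := by
  refine pg_inv_unique (a := a * b) (pg_ama _) (pg_imi _) ?_ ?_
  · calc a * b * (b⁻¹ * a⁻¹) * (a * b)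
        = a * ((b * b⁻¹) * (a⁻¹ * a)) * b := by simp [mul_assoc]
      _ = a * ((a⁻¹ * a) * (b * b⁻¹)) * b := by rw [pg_idem_comm' (pg_idem_ai b) (pg_idem_ia a)]
      _ = (a * a⁻¹ * a) * (b * b⁻¹ * b) := by simp [mul_assoc]
      _ = a * b := by rw [pg_ama, pg_ama]
  · calc b⁻¹ * a⁻¹ * (a * b) * (b⁻¹ * a⁻¹)
        = b⁻¹ * ((a⁻¹ * a) * (b * b⁻¹)) * a⁻¹ := by simp [mul_assoc]
      _ = b⁻¹ * ((b * b⁻¹) * (a⁻¹ * a)) * a⁻¹ := by rw [pg_idem_comm' (pg_idem_ia a) (pg_idem_ai b)]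
      _ = (b⁻¹ * b * b⁻¹) * (a⁻¹ * a * a⁻¹) := by simp [mul_assoc]
      _ = b⁻¹ * a⁻¹ := by rw [pg_imi, pg_imi]

private lemma pg_idem_inv {e : S} (he : IsIdem e) : e⁻¹ = e := by
  refine pg_inv_unique (a := e) (pg_ama e) (pg_imi e) ?_ ?_ <;>
  · show e * e * e = e
    rw [he, he]

private lemma pg_idem_conj (a : S) {e : S} (he : IsIdem e) : IsIdem (a * e * a⁻¹) := by
  show a * e * a⁻¹ * (a * e * a⁻¹) = a * e * a⁻¹
  calc a * e * a⁻¹ * (a * e * a⁻¹)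
      = a * (e * (a⁻¹ * a)) * e * a⁻¹ := by simp [mul_assoc]
    _ = a * ((a⁻¹ * a) * e) * e * a⁻¹ := by rw [pg_idem_comm' he (pg_idem_ia a)]
    _ = (a * a⁻¹ * a) * (e * e) * a⁻¹ := by simp [mul_assoc]
    _ = a * e * a⁻¹ := by rw [pg_ama, he]

private lemma pg_idem_conj' (a : S) {e : S} (he : IsIdem e) : IsIdem (a⁻¹ * e * a) := by
  have := pg_idem_conj a⁻¹ he
  rwa [pg_inv_invol] at this

private lemma pg_nle_refl (a : S) : nle a a := by
  show a = a * (a⁻¹ * a)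
  rw [← mul_assoc, pg_ama]

private lemma pg_nle_of_idem_right {a b e : S} (he : IsIdem e) (hab : a = b * e) : nle a b := by
  show a = b * (a⁻¹ * a)
  have hinv : a⁻¹ = e * b⁻¹ := by rw [hab, pg_mul_inv_rev', pg_idem_inv he]
  have h2 : a⁻¹ * a = (b⁻¹ * b) * e := by
    rw [hinv, hab]
    calc e * b⁻¹ * (b * e) = e * ((b⁻¹ * b) * e) := by simp [mul_assoc]
      _ = e * (e * (b⁻¹ * b)) := by rw [pg_idem_comm' he (pg_idem_ia b)]
      _ = (e * e) * (b⁻¹ * b) := by simp [mul_assoc]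
      _ = (b⁻¹ * b) * e := by rw [he, pg_idem_comm' he (pg_idem_ia b)]
  rw [h2]
  calc a = b * e := hab
    _ = (b * b⁻¹ * b) * e := by rw [pg_ama]
    _ = b * (b⁻¹ * b * e) := by simp [mul_assoc]

private lemma pg_nle_of_idem_left {a b f : S} (hf : IsIdem f) (hab : a = f * b) : nle a b := by
  refine pg_nle_of_idem_right (pg_idem_conj' b hf) ?_
  calc a = f * b := hab
    _ = f * (b * b⁻¹ * b) := by rw [pg_ama]
    _ = (f * (b * b⁻¹)) * b := by simp [mul_assoc]
    _ = ((b * b⁻¹) * f) * b := by rw [pg_idem_comm' hf (pg_idem_ai b)]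
    _ = b * (b⁻¹ * f * b) := by simp [mul_assoc]

private lemma pg_nle_right {a b : S} (h : nle a b) : ∃ e, IsIdem e ∧ a = b * e :=
  ⟨a⁻¹ * a, pg_idem_ia a, h⟩

private lemma pg_nle_left {a b : S} (h : nle a b) : ∃ f, IsIdem f ∧ a = f * b := by
  obtain ⟨e, he, hab⟩ := pg_nle_right h
  refine ⟨b * e * b⁻¹, pg_idem_conj b he, ?_⟩
  calc a = b * e := hab
    _ = (b * (e * (b⁻¹ * b))) := by
        rw [pg_idem_comm' he (pg_idem_ia b), ← mul_assoc, ← mul_assoc, pg_ama]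
    _ = b * e * b⁻¹ * b := by simp [mul_assoc]

private lemma pg_nle_trans {a b c : S} (h1 : nle a b) (h2 : nle b c) : nle a c := by
  obtain ⟨e, he, h1e⟩ := pg_nle_right h1
  obtain ⟨f, hf, h2f⟩ := pg_nle_right h2
  refine pg_nle_of_idem_right (pg_idem_mul hf he) ?_
  rw [h1e, h2f, mul_assoc]

private lemma pg_nle_mul_left {a b : S} (c : S) (h : nle a b) : nle (c * a) (c * b) := by
  obtain ⟨e, he, hab⟩ := pg_nle_right h
  exact pg_nle_of_idem_right he (by rw [hab, mul_assoc])

private lemma pg_nle_mul_right {a b : S} (c : S) (h : nle a b) : nle (a * c) (b * c) := by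
  obtain ⟨f, hf, hab⟩ := pg_nle_left h
  exact pg_nle_of_idem_left hf (by rw [hab, mul_assoc])

private lemma pg_nle_mul {a b c d : S} (h1 : nle a b) (h2 : nle c d) : nle (a * c) (b * d) :=
  pg_nle_trans (pg_nle_mul_right c h1) (pg_nle_mul_left b h2)

private lemma pg_nle_inv {a b : S} (h : nle a b) : nle a⁻¹ b⁻¹ := by
  obtain ⟨e, he, hab⟩ := pg_nle_right h
  refine pg_nle_of_idem_left he ?_
  rw [hab, pg_mul_inv_rev', pg_idem_inv he]

private lemma pg_nle_idem_mul {e : S} (a : S) (he : IsIdem e) : nle (e * a) a :=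
  pg_nle_of_idem_left he rfl

private lemma pg_compat_mul_left {x y : S} (c : S) (h : Compat x y) : Compat (c * x) (c * y) := by
  constructor
  · have key : (c * x)⁻¹ * (c * y) = (x⁻¹ * (c⁻¹ * c) * x) * (x⁻¹ * y) := by
      rw [pg_mul_inv_rev']
      calc x⁻¹ * c⁻¹ * (c * y)
          = (x⁻¹ * x * x⁻¹) * ((c⁻¹ * c) * y) := by rw [pg_imi]; simp [mul_assoc]
        _ = x⁻¹ * ((x * x⁻¹) * (c⁻¹ * c)) * y := by simp [mul_assoc]
        _ = x⁻¹ * ((c⁻¹ * c) * (x * x⁻¹)) * y := by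
            rw [pg_idem_comm' (pg_idem_ai x) (pg_idem_ia c)]
        _ = (x⁻¹ * (c⁻¹ * c) * x) * (x⁻¹ * y) := by simp [mul_assoc]
    rw [show ((c * x)⁻¹ * (c * y) : S) = _ from key]
    exact pg_idem_mul (pg_idem_conj' x (pg_idem_ia c)) h.1
  · have key : (c * x) * (c * y)⁻¹ = c * (x * y⁻¹) * c⁻¹ := by
      rw [pg_mul_inv_rev']; simp [mul_assoc]
    rw [show ((c * x) * (c * y)⁻¹ : S) = _ from key]
    exact pg_idem_conj c h.2

end InvLemmas

/-- If `A`, `B` are completely prime filters in a pseudogroup with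
`(A⁻¹A)^↑ = (BB⁻¹)^↑`, then `(AB)^↑` is a completely prime filter. -/
theorem stmt8 {S : Type*} [Pseudogroup S] (A B : Set S)
    (hA : CompletelyPrime A) (hB : CompletelyPrime B)
    (h : upSet (setMul (setInv A) A) = upSet (setMul B (setInv B))) :
    CompletelyPrime (upSet (setMul A B)) := by
  have mul_assoc' : ∀ a b c : S, a * b * c = a * (b * c) := InvSemigroup.mul_assoc
  constructor
  · refine ⟨?_, ?_, ?_⟩
    · -- nonempty
      obtain ⟨a, ha⟩ := hA.1.1
      obtain ⟨b, hb⟩ := hB.1.1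
      exact ⟨a * b, ⟨a * b, ⟨a, ha, b, hb, rfl⟩, pg_nle_refl _⟩⟩
    · -- upward closed
      rintro x ⟨t, ht, htx⟩ y hxy
      exact ⟨t, ht, pg_nle_trans htx hxy⟩
    · -- downward directed
      rintro x ⟨_, ⟨a₁, ha₁, b₁, hb₁, rfl⟩, hx⟩ y ⟨_, ⟨a₂, ha₂, b₂, hb₂, rfl⟩, hy⟩
      obtain ⟨a, ha, ha1, ha2⟩ := hA.1.2.2 a₁ ha₁ a₂ ha₂
      obtain ⟨b, hb, hb1, hb2⟩ := hB.1.2.2 b₁ hb₁ b₂ hb₂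
      refine ⟨a * b, ⟨a * b, ⟨a, ha, b, hb, rfl⟩, pg_nle_refl _⟩, ?_, ?_⟩
      · exact pg_nle_trans (pg_nle_mul ha1 hb1) hx
      · exact pg_nle_trans (pg_nle_mul ha2 hb2) hy
  · -- completely prime
    rintro X s hX hs ⟨_, ⟨a, ha, b, hb, rfl⟩, habs⟩
    -- a⁻¹ * a lies above some b₁ * b₂⁻¹ with b₁, b₂ ∈ B
    have h1 : a⁻¹ * a ∈ upSet (setMul B (setInv B)) := by
      rw [← h]
      exact ⟨a⁻¹ * a, ⟨a⁻¹, ⟨a, ha, rfl⟩, a, ha, rfl⟩, pg_nle_refl _⟩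
    obtain ⟨_, ⟨b₁, hb₁, _, ⟨b₂, hb₂, rfl⟩, rfl⟩, ht⟩ := h1
    obtain ⟨b₃, hb₃, h31, h32⟩ := hB.1.2.2 b₁ hb₁ b₂ hb₂
    obtain ⟨b', hb', h3, hbb⟩ := hB.1.2.2 b₃ hb₃ b hb
    have key1 : nle (b' * b'⁻¹) (a⁻¹ * a) :=
      pg_nle_trans (pg_nle_mul (pg_nle_trans h3 h31) (pg_nle_inv (pg_nle_trans h3 h32))) ht
    have key2 : nle b' (a⁻¹ * a * b') := by
      have := pg_nle_mul_right b' key1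
      rwa [InvSemigroup.mul_inv_mul b'] at this
    have key3 : nle (a⁻¹ * a * b') (a⁻¹ * s) := by
      have h4 : nle (a⁻¹ * (a * b')) (a⁻¹ * (a * b)) := pg_nle_mul_left a⁻¹ (pg_nle_mul_left a hbb)
      have h5 : nle (a⁻¹ * (a * b)) (a⁻¹ * s) := pg_nle_mul_left a⁻¹ habs
      rw [mul_assoc']
      exact pg_nle_trans h4 h5
    have key4 : nle b' (a⁻¹ * s) := pg_nle_trans key2 key3
    have hmemB : a⁻¹ * s ∈ B := hB.1.2.1 b' hb' _ key4
    have hjoin : IsJoin ((fun x => a⁻¹ * x) '' X) (a⁻¹ * s) :=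
      Pseudogroup.mul_join_left X s a⁻¹ hs
    have hpc : PairwiseCompat ((fun x => a⁻¹ * x) '' X) := by
      rintro _ ⟨x, hx, rfl⟩ _ ⟨y, hy, rfl⟩
      exact pg_compat_mul_left a⁻¹ (hX x hx y hy)
    obtain ⟨_, ⟨x, hx, rfl⟩, hxB⟩ := hB.2 _ _ hpc hjoin hmemB
    refine ⟨x, hx, ⟨a * (a⁻¹ * x), ⟨a, ha, a⁻¹ * x, hxB, rfl⟩, ?_⟩⟩
    exact pg_nle_of_idem_left (pg_idem_ai a) (mul_assoc' a a⁻¹ x).symm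
end

section
/- In a pseudogroup: (1) if a is a finite element then a⁻¹a is finite; (2) if a is any element and e ≤ a⁻¹a is a finite idempotent then ae is finite; (3) if a and b are finite with a⁻¹a = bb⁻¹ then ab is finite. -/
/-- An element `a` of a pseudogroup is finite if every compatible covering of `a`
has a finite subcovering. -/
def FiniteElt {S : Type*} [InvSemigroup S] (a : S) : Prop :=
  ∀ (X : Set S) (s : S), PairwiseCompat X → IsJoin X s → nle a s →
    ∃ Y : Finset S, ↑Y ⊆ X ∧ ∃ t : S, IsJoin (↑Y : Set S) t ∧ nle a t


namespace PGProof

variable {S : Type*} [InvSemigroup S]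

instance : Semigroup S := ⟨InvSemigroup.mul_assoc⟩

lemma mia (a : S) : a * a⁻¹ * a = a := InvSemigroup.mul_inv_mul a
lemma imi (a : S) : a⁻¹ * a * a⁻¹ = a⁻¹ := InvSemigroup.inv_mul_inv a
lemma icomm {e f : S} (he : IsIdem e) (hf : IsIdem f) : e * f = f * e :=
  InvSemigroup.idem_comm e f he hf

lemma idem_im (a : S) : IsIdem (a⁻¹ * a) := by
  show a⁻¹ * a * (a⁻¹ * a) = a⁻¹ * a
  rw [← mul_assoc, imi]

lemma idem_mi (a : S) : IsIdem (a * a⁻¹) := by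
  show a * a⁻¹ * (a * a⁻¹) = a * a⁻¹
  rw [← mul_assoc, mia]

lemma idem_mul {e f : S} (he : IsIdem e) (hf : IsIdem f) : IsIdem (e * f) := by
  show e * f * (e * f) = e * f
  calc e * f * (e * f) = e * (f * e) * f := by simp only [mul_assoc]
    _ = e * (e * f) * f := by rw [icomm hf he]
    _ = (e * e) * (f * f) := by simp only [mul_assoc]
    _ = e * f := by rw [he, hf]

lemma inv_unique {a x y : S} (h1 : a * x * a = a) (h2 : x * a * x = x)
    (h3 : a * y * a = a) (h4 : y * a * y = y) : x = y := by
  have hax : IsIdem (a * x) := by show a * x * (a * x) = a * x; rw [← mul_assoc, h1]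
  have hay : IsIdem (a * y) := by show a * y * (a * y) = a * y; rw [← mul_assoc, h3]
  have hxa : IsIdem (x * a) := by show x * a * (x * a) = x * a; rw [← mul_assoc, h2]
  have hya : IsIdem (y * a) := by show y * a * (y * a) = y * a; rw [← mul_assoc, h4]
  have ex : x = y * a * x := by
    calc x = x * a * x := h2.symm
      _ = x * (a * y * a) * x := by rw [h3]
      _ = x * a * (y * a) * x := by simp only [mul_assoc]
      _ = y * a * (x * a) * x := by
            rw [show x * a * (y * a) * x = (x * a) * (y * a) * x from rfl,
              icomm hxa hya]
      _ = y * a * (x * a * x) := by simp only [mul_assoc]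
      _ = y * a * x := by rw [h2]
  have ey : y = y * a * x := by
    calc y = y * a * y := h4.symm
      _ = y * (a * x * a) * y := by rw [h1]
      _ = y * ((a * x) * (a * y)) := by simp only [mul_assoc]
      _ = y * ((a * y) * (a * x)) := by rw [icomm hax hay]
      _ = (y * a * y) * (a * x) := by simp only [mul_assoc]
      _ = y * a * x := by rw [h4, mul_assoc]
  rw [ex, ← ey]

lemma idem_inv {e : S} (he : IsIdem e) : e⁻¹ = e :=
  inv_unique (mia e) (imi e) (by rw [he, he]) (by rw [he, he])

lemma pg_inv_inv (a : S) : a⁻¹⁻¹ = a :=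
  inv_unique (mia a⁻¹) (imi a⁻¹) (imi a) (mia a)

lemma pg_mul_inv_rev (a b : S) : (a * b)⁻¹ = b⁻¹ * a⁻¹ := by
  refine inv_unique (mia (a * b)) (imi (a * b)) ?_ ?_
  · calc a * b * (b⁻¹ * a⁻¹) * (a * b)
        = a * ((b * b⁻¹) * (a⁻¹ * a)) * b := by simp only [mul_assoc]
      _ = a * ((a⁻¹ * a) * (b * b⁻¹)) * b := by rw [icomm (idem_mi b) (idem_im a)]
      _ = (a * a⁻¹ * a) * (b * b⁻¹ * b) := by simp only [mul_assoc]
      _ = a * b := by rw [mia, mia]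
  · calc b⁻¹ * a⁻¹ * (a * b) * (b⁻¹ * a⁻¹)
        = b⁻¹ * ((a⁻¹ * a) * (b * b⁻¹)) * a⁻¹ := by simp only [mul_assoc]
      _ = b⁻¹ * ((b * b⁻¹) * (a⁻¹ * a)) * a⁻¹ := by rw [icomm (idem_im a) (idem_mi b)]
      _ = (b⁻¹ * b * b⁻¹) * (a⁻¹ * a * a⁻¹) := by simp only [mul_assoc]
      _ = b⁻¹ * a⁻¹ := by rw [imi, imi]

lemma idem_conj {e : S} (c : S) (he : IsIdem e) : IsIdem (c * e * c⁻¹) := by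
  show c * e * c⁻¹ * (c * e * c⁻¹) = c * e * c⁻¹
  calc c * e * c⁻¹ * (c * e * c⁻¹)
      = c * (e * (c⁻¹ * c)) * (e * c⁻¹) := by simp only [mul_assoc]
    _ = c * ((c⁻¹ * c) * e) * (e * c⁻¹) := by rw [icomm he (idem_im c)]
    _ = (c * c⁻¹ * c) * ((e * e) * c⁻¹) := by simp only [mul_assoc]
    _ = c * e * c⁻¹ := by rw [mia, he, mul_assoc]

lemma idem_conj' {e : S} (c : S) (he : IsIdem e) : IsIdem (c⁻¹ * e * c) := by
  have := idem_conj c⁻¹ he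
  rwa [pg_inv_inv] at this

lemma nle_refl (a : S) : nle a a := by
  show a = a * (a⁻¹ * a); rw [← mul_assoc, mia]

lemma nle_iff {a b : S} : nle a b ↔ ∃ e : S, IsIdem e ∧ a = b * e := by
  constructor
  · intro h; exact ⟨a⁻¹ * a, idem_im a, h⟩
  · rintro ⟨e, he, rfl⟩
    show b * e = b * ((b * e)⁻¹ * (b * e))
    rw [pg_mul_inv_rev, idem_inv he]
    have key : b * (e * b⁻¹ * (b * e)) = b * e := by
      calc b * (e * b⁻¹ * (b * e)) = b * ((e * (b⁻¹ * b)) * e) := by simp only [mul_assoc]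
        _ = b * (((b⁻¹ * b) * e) * e) := by rw [icomm he (idem_im b)]
        _ = (b * b⁻¹ * b) * (e * e) := by simp only [mul_assoc]
        _ = b * e := by rw [mia, he]
    exact key.symm

lemma nle_trans {a b c : S} (h1 : nle a b) (h2 : nle b c) : nle a c := by
  obtain ⟨e, he, rfl⟩ := nle_iff.mp h1
  obtain ⟨f, hf, rfl⟩ := nle_iff.mp h2
  exact nle_iff.mpr ⟨f * e, idem_mul hf he, by rw [mul_assoc]⟩

lemma nle_mul_left {a b : S} (c : S) (h : nle a b) : nle (c * a) (c * b) := by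
  obtain ⟨e, he, rfl⟩ := nle_iff.mp h
  exact nle_iff.mpr ⟨e, he, by rw [mul_assoc]⟩

lemma nle_mul_right {a b : S} (c : S) (h : nle a b) : nle (a * c) (b * c) := by
  obtain ⟨e, he, rfl⟩ := nle_iff.mp h
  refine nle_iff.mpr ⟨c⁻¹ * e * c, idem_conj' c he, ?_⟩
  have key : b * c * (c⁻¹ * e * c) = b * e * c := by
    calc b * c * (c⁻¹ * e * c) = b * ((c * c⁻¹) * e) * c := by simp only [mul_assoc]
      _ = b * (e * (c * c⁻¹)) * c := by rw [icomm (idem_mi c) he]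
      _ = (b * e) * (c * c⁻¹ * c) := by simp only [mul_assoc]
      _ = b * e * c := by rw [mia]
  exact key.symm

lemma nle_idem_mul_left {e : S} (he : IsIdem e) (x : S) : nle (e * x) x := by
  refine nle_iff.mpr ⟨x⁻¹ * e * x, idem_conj' x he, ?_⟩
  have key : x * (x⁻¹ * e * x) = e * x := by
    calc x * (x⁻¹ * e * x) = (x * x⁻¹) * e * x := by simp only [mul_assoc]
      _ = e * (x * x⁻¹) * x := by rw [icomm (idem_mi x) he]
      _ = e * x := by rw [mul_assoc e, mia]
  exact key.symm

lemma nle_idem_mul_right {e : S} (he : IsIdem e) (x : S) : nle (x * e) x :=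
  nle_iff.mpr ⟨e, he, rfl⟩

lemma compat_mul_left {a b : S} (c : S) (h : Compat a b) : Compat (c * a) (c * b) := by
  obtain ⟨h1, h2⟩ := h
  constructor
  · have key : (c * a)⁻¹ * (c * b) = (a⁻¹ * b) * (b⁻¹ * (c⁻¹ * c) * b) := by
      rw [pg_mul_inv_rev]
      calc a⁻¹ * c⁻¹ * (c * b) = a⁻¹ * ((c⁻¹ * c) * (b * b⁻¹ * b)) := by
            rw [mia]; simp only [mul_assoc]
        _ = a⁻¹ * ((b * b⁻¹) * ((c⁻¹ * c) * b)) := by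
            rw [show (c⁻¹ * c) * (b * b⁻¹ * b) = ((c⁻¹ * c) * (b * b⁻¹)) * b by
                  simp only [mul_assoc],
              icomm (idem_im c) (idem_mi b), mul_assoc]
        _ = (a⁻¹ * b) * (b⁻¹ * (c⁻¹ * c) * b) := by simp only [mul_assoc]
    rw [key]
    exact idem_mul h1 (idem_conj' b (idem_im c))
  · have key : (c * a) * (c * b)⁻¹ = c * (a * b⁻¹) * c⁻¹ := by
      rw [pg_mul_inv_rev]; simp only [mul_assoc]
    rw [key]; exact idem_conj c h2

lemma compat_mul_right {a b : S} (c : S) (h : Compat a b) : Compat (a * c) (b * c) := by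
  obtain ⟨h1, h2⟩ := h
  constructor
  · have key : (a * c)⁻¹ * (b * c) = c⁻¹ * (a⁻¹ * b) * c := by
      rw [pg_mul_inv_rev]; simp only [mul_assoc]
    rw [key]; exact idem_conj' c h1
  · have key : (a * c) * (b * c)⁻¹ = (a * (c * c⁻¹) * a⁻¹) * (a * b⁻¹) := by
      rw [pg_mul_inv_rev]
      calc a * c * (c⁻¹ * b⁻¹) = (a * a⁻¹ * a) * (c * (c⁻¹ * b⁻¹)) := by rw [mia]; simp only [mul_assoc]
        _ = a * ((a⁻¹ * a) * (c * c⁻¹)) * b⁻¹ := by simp only [mul_assoc]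
        _ = a * ((c * c⁻¹) * (a⁻¹ * a)) * b⁻¹ := by rw [icomm (idem_im a) (idem_mi c)]
        _ = (a * (c * c⁻¹) * a⁻¹) * (a * b⁻¹) := by simp only [mul_assoc]
    rw [key]
    exact idem_mul (idem_conj a (idem_mi c)) h2

section PGKey

variable {S : Type*} [Pseudogroup S]

lemma key (φ ψ : S → S) (c g : S)
    (hφj : ∀ (X : Set S) (s : S), IsJoin X s → IsJoin (φ '' X) (φ s))
    (hφm : ∀ u v : S, nle u v → nle (φ u) (φ v))
    (hφc : ∀ u v : S, Compat u v → Compat (φ u) (φ v))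
    (hψj : ∀ (X : Set S) (s : S), IsJoin X s → IsJoin (ψ '' X) (ψ s))
    (hψm : ∀ u v : S, nle u v → nle (ψ u) (ψ v))
    (hback : ∀ x : S, nle (ψ (φ x)) x)
    (hc : FiniteElt c) (hcg : c = φ g) (hgc : g = ψ c) :
    FiniteElt g := by
  intro X s hX hs hgs
  have hc1 : nle c (φ s) := by rw [hcg]; exact hφm g s hgs
  have hX' : PairwiseCompat (φ '' X) := by
    rintro _ ⟨x, hx, rfl⟩ _ ⟨y, hy, rfl⟩
    exact hφc _ _ (hX x hx y hy)
  obtain ⟨Y, hYsub, t, htj, hct⟩ := hc (φ '' X) (φ s) hX' (hφj X s hs) hc1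
  classical
  have hch : ∀ y ∈ Y, ∃ x, x ∈ X ∧ φ x = y := fun y hy => hYsub hy
  choose! f hf1 hf2 using hch
  have hZX : (↑(Y.image f) : Set S) ⊆ X := by
    intro z hz
    obtain ⟨y, hy, rfl⟩ := Finset.mem_image.mp (by exact_mod_cast hz)
    exact hf1 y hy
  refine ⟨Y.image f, hZX, ?_⟩
  obtain ⟨t', ht'⟩ := Pseudogroup.join_exists (↑(Y.image f))
    (fun u hu v hv => hX u (hZX hu) v (hZX hv))
  refine ⟨t', ht', ?_⟩
  have hup : ∀ z ∈ ψ '' (↑Y : Set S), nle z t' := by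
    rintro _ ⟨y, hy, rfl⟩
    have hy' : y ∈ Y := by exact_mod_cast hy
    have h1 : nle (ψ y) (f y) := by
      have hb := hback (f y)
      rwa [hf2 y hy'] at hb
    have h2 : nle (f y) t' := ht'.1 (f y) (by
      exact_mod_cast Finset.mem_image_of_mem f hy')
    exact nle_trans h1 h2
  have hψt : nle (ψ t) t' := (hψj (↑Y) t htj).2 t' hup
  have hgt : nle g (ψ t) := by rw [hgc]; exact hψm c t hct
  exact nle_trans hgt hψt

end PGKey

end PGProof

/-- In a pseudogroup: if `a` is finite then `a⁻¹a` is finite; if `e ≤ a⁻¹a` is a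
finite idempotent then `ae` is finite; if `a`, `b` are finite with `a⁻¹a = bb⁻¹`
then `ab` is finite. -/
theorem stmt12 {S : Type*} [Pseudogroup S] :
    (∀ a : S, FiniteElt a → FiniteElt (a⁻¹ * a)) ∧
    (∀ a e : S, IsIdem e → nle e (a⁻¹ * a) → FiniteElt e → FiniteElt (a * e)) ∧
    (∀ a b : S, FiniteElt a → FiniteElt b → a⁻¹ * a = b * b⁻¹ →
      FiniteElt (a * b)) := by
  refine ⟨?_, ?_, ?_⟩
  · intro a ha
    refine PGProof.key (fun x => a * x) (fun x => a⁻¹ * x) a (a⁻¹ * a)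
      (fun X s h => Pseudogroup.mul_join_left X s a h)
      (fun u v h => PGProof.nle_mul_left a h)
      (fun u v h => PGProof.compat_mul_left a h)
      (fun X s h => Pseudogroup.mul_join_left X s a⁻¹ h)
      (fun u v h => PGProof.nle_mul_left a⁻¹ h)
      (fun x => ?_) ha ?_ rfl
    · show nle (a⁻¹ * (a * x)) x
      rw [← mul_assoc]
      exact PGProof.nle_idem_mul_left (PGProof.idem_im a) x
    · show a = a * (a⁻¹ * a)
      rw [← mul_assoc, PGProof.mia]
  · intro a e he hle hf
    refine PGProof.key (fun x => a⁻¹ * x) (fun x => a * x) e (a * e)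
      (fun X s h => Pseudogroup.mul_join_left X s a⁻¹ h)
      (fun u v h => PGProof.nle_mul_left a⁻¹ h)
      (fun u v h => PGProof.compat_mul_left a⁻¹ h)
      (fun X s h => Pseudogroup.mul_join_left X s a h)
      (fun u v h => PGProof.nle_mul_left a h)
      (fun x => ?_) hf ?_ rfl
    · show nle (a * (a⁻¹ * x)) x
      rw [← mul_assoc]
      exact PGProof.nle_idem_mul_left (PGProof.idem_mi a) x
    · show e = a⁻¹ * (a * e)
      have hle' : e = a⁻¹ * a * e := by
        have := hle
        rw [show nle e (a⁻¹ * a) ↔ e = a⁻¹ * a * (e⁻¹ * e) from Iff.rfl] at this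
        rwa [PGProof.idem_inv he, he] at this
      rw [← mul_assoc]
      exact hle'
  · intro a b ha hb hab
    refine PGProof.key (fun x => x * b⁻¹) (fun x => x * b) a (a * b)
      (fun X s h => Pseudogroup.mul_join_right X s b⁻¹ h)
      (fun u v h => PGProof.nle_mul_right b⁻¹ h)
      (fun u v h => PGProof.compat_mul_right b⁻¹ h)
      (fun X s h => Pseudogroup.mul_join_right X s b h)
      (fun u v h => PGProof.nle_mul_right b h)
      (fun x => ?_) ha ?_ rfl
    · show nle (x * b⁻¹ * b) x
      rw [mul_assoc]
      exact PGProof.nle_idem_mul_right (PGProof.idem_im b) x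
    · show a = a * b * b⁻¹
      rw [mul_assoc, ← hab, ← mul_assoc, PGProof.mia]
end
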